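/- arXiv:1208.1805 — 8 statements merged into one kernel-verified Lean document; each statement's English description precedes it below -/
import Mathlib

section
/- If α is a real number and n an integer with n > |α| > 0, then (n-α)^(n-α)/n^n > (1/(n·e))^α. -/
theorem stmt_0 (α : ℝ) (n : ℤ) (h1 : |α| > 0) (h2 : (n : ℝ) > |α|) :
    ((n : ℝ) - α) ^ ((n : ℝ) - α) / (n : ℝ) ^ (n : ℝ) >
      (1 / ((n : ℝ) * Real.exp 1)) ^ α := by
  have hα0 : α ≠ 0 := abs_pos.mp h1
  have hn : (0:ℝ) < n := lt_trans h1 h2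
  have hna : 0 < (n:ℝ) - α := by
    have := le_abs_self α
    linarith
  set t : ℝ := ((n:ℝ) - α) / n with htdef
  have ht : 0 < t := div_pos hna hn
  have htn : (n:ℝ) - α = t * n := by
    rw [htdef, div_mul_cancel₀ _ (ne_of_gt hn)]
  have hαt : α = n * (1 - t) := by
    have := htn
    linarith [htn]
    
  have ht1 : t ≠ 1 := by
    intro h
    rw [h] at hαt
    simp at hαt
    exact hα0 hαt
  have hlogt : Real.log t ≠ 0 := by
    intro h
    have := Real.exp_log ht
    rw [h, Real.exp_zero] at this
    exact ht1 this.symm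
  have hl : 1 - 1/t < Real.log t := by
    have h' := Real.add_one_lt_exp (x := Real.log (1/t)) (by
      rw [Real.log_div one_ne_zero (ne_of_gt ht), Real.log_one]
      simpa using hlogt)
    rw [Real.exp_log (by positivity), Real.log_div one_ne_zero (ne_of_gt ht),
      Real.log_one] at h'
    have ht' : (0:ℝ) < 1/t := by positivity
    nlinarith
  have key : 0 < t * Real.log t + 1 - t := by
    have h2' := mul_lt_mul_of_pos_left hl ht
    have h3 : t * (1 - 1/t) = t - 1 := by field_simp
    linarith
  have e1 : ((n:ℝ) - α) ^ ((n:ℝ) - α)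
      = Real.exp (((n:ℝ) - α) * Real.log ((n:ℝ) - α)) := by
    rw [Real.rpow_def_of_pos hna]; ring_nf
  have e2 : (n:ℝ) ^ (n:ℝ) = Real.exp ((n:ℝ) * Real.log n) := by
    rw [Real.rpow_def_of_pos hn]; ring_nf
  have e3 : (1 / ((n:ℝ) * Real.exp 1)) ^ α
      = Real.exp (α * Real.log (1 / ((n:ℝ) * Real.exp 1))) := by
    rw [Real.rpow_def_of_pos (by positivity)]; ring_nf
  rw [e1, e2, e3, ← Real.exp_sub, gt_iff_lt, Real.exp_lt_exp]
  have hlog1 : Real.log (1 / ((n:ℝ) * Real.exp 1)) = -(Real.log n + 1) := by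
    rw [Real.log_div one_ne_zero (by positivity), Real.log_one,
      Real.log_mul (ne_of_gt hn) (Real.exp_ne_zero 1), Real.log_exp]
    ring
  have hlog2 : Real.log ((n:ℝ) - α) = Real.log t + Real.log n := by
    rw [htn, Real.log_mul (ne_of_gt ht) (ne_of_gt hn)]
  rw [hlog1, hlog2]
  nlinarith [mul_pos hn key]
end

section
/- Let U be a unitary complex matrix written in block form U = [[A, B], [C, D]] where A is an n×n block and D is a d×d block (n and d need not be equal). Then |det(A)| = |det(D)|. -/
/-!
If `U = [[A, B], [C, D]]` is unitary, the off-diagonal block of `U Uᴴ = 1` says `A Cᴴ + B Dᴴ = 0`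
and the lower diagonal block says `C Cᴴ + D Dᴴ = 1`, so `U [[1, Cᴴ], [0, Dᴴ]] = [[A, 0], [C, 1]]`.
Taking determinants of these block-triangular matrices gives `det U · conj (det D) = det A`, and
`|det U| = 1`.
-/

namespace Matrix

variable {m n R : Type*} [Fintype m] [Fintype n] [DecidableEq m] [DecidableEq n]

theorem fromBlocks_mul_fromBlocks_one_conjTranspose [CommRing R] [StarRing R]
    {A : Matrix m m R} {B : Matrix m n R} {C : Matrix n m R} {D : Matrix n n R}
    (hU : fromBlocks A B C D * (fromBlocks A B C D)ᴴ = 1) :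
    fromBlocks A B C D * fromBlocks 1 Cᴴ 0 Dᴴ = fromBlocks A 0 C 1 := by
  rw [fromBlocks_conjTranspose, fromBlocks_multiply, ← fromBlocks_one] at hU
  obtain ⟨-, hAC, -, hCD⟩ := fromBlocks_inj.mp hU
  rw [fromBlocks_multiply]
  simp [hAC, hCD]

theorem det_fromBlocks_mul_star_det_eq_det [CommRing R] [StarRing R]
    {A : Matrix m m R} {B : Matrix m n R} {C : Matrix n m R} {D : Matrix n n R}
    (hU : fromBlocks A B C D * (fromBlocks A B C D)ᴴ = 1) :
    (fromBlocks A B C D).det * star D.det = A.det := by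
  simpa [det_fromBlocks_zero₂₁, det_fromBlocks_zero₁₂, det_conjTranspose] using
    congrArg det (fromBlocks_mul_fromBlocks_one_conjTranspose hU)

theorem norm_det_eq_norm_det_of_fromBlocks_mul_conjTranspose_eq_one {𝕜 : Type*} [RCLike 𝕜]
    {A : Matrix m m 𝕜} {B : Matrix m n 𝕜} {C : Matrix n m 𝕜} {D : Matrix n n 𝕜}
    (hU : fromBlocks A B C D * (fromBlocks A B C D)ᴴ = 1) :
    ‖A.det‖ = ‖D.det‖ := by
  have hdetU : ‖(fromBlocks A B C D).det‖ = 1 :=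
    CStarRing.norm_of_mem_unitary (det_of_mem_unitary (mem_unitaryGroup_iff.mpr hU))
  rw [← det_fromBlocks_mul_star_det_eq_det hU, norm_mul, hdetU, norm_star, one_mul]

end Matrix

theorem stmt_3 (n d : ℕ)
    (A : Matrix (Fin n) (Fin n) ℂ) (B : Matrix (Fin n) (Fin d) ℂ)
    (C : Matrix (Fin d) (Fin n) ℂ) (D : Matrix (Fin d) (Fin d) ℂ)
    (hU : Matrix.fromBlocks A B C D * (Matrix.fromBlocks A B C D).conjTranspose = 1) :
    ‖A.det‖ = ‖D.det‖ :=
  Matrix.norm_det_eq_norm_det_of_fromBlocks_mul_conjTranspose_eq_one hU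
end

section
/- Let H be a real Hadamard matrix of order h = n + d (i.e., an h×h matrix with entries ±1 satisfying H·Hᵀ = h·I), written in block form H = [[A, B], [C, D]] with A of size n×n and D of size d×d. Then |det(A)| = h^(h/2 - d)·|det(D)|. -/
theorem stmt_4 (n d : ℕ)
    (A : Matrix (Fin n) (Fin n) ℝ) (B : Matrix (Fin n) (Fin d) ℝ)
    (C : Matrix (Fin d) (Fin n) ℝ) (D : Matrix (Fin d) (Fin d) ℝ)
    (hpm : ∀ i j, Matrix.fromBlocks A B C D i j = 1 ∨ Matrix.fromBlocks A B C D i j = -1)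
    (hH : Matrix.fromBlocks A B C D * (Matrix.fromBlocks A B C D).transpose
          = ((n + d : ℕ) : ℝ) • 1) :
    |A.det| = ((n + d : ℕ) : ℝ) ^ (((n + d : ℕ) : ℝ) / 2 - (d : ℝ)) * |D.det| := by
  rcases Nat.eq_zero_or_pos (n + d) with h0 | hpos
  · obtain ⟨hn, hd⟩ := Nat.add_eq_zero.mp h0
    subst hn; subst hd
    norm_num [Matrix.det_fin_zero, Real.rpow_zero]
  · have hpos' : (0:ℝ) < ((n+d:ℕ):ℝ) := by exact_mod_cast hpos
    -- block equations
    have hmul := hH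
    rw [Matrix.fromBlocks_transpose, Matrix.fromBlocks_multiply] at hmul
    have hrhs : ((n+d:ℕ):ℝ) • (1 : Matrix (Fin n ⊕ Fin d) (Fin n ⊕ Fin d) ℝ)
        = Matrix.fromBlocks (((n+d:ℕ):ℝ) • 1) 0 0 (((n+d:ℕ):ℝ) • 1) := by
      rw [← Matrix.fromBlocks_one, Matrix.fromBlocks_smul]
      simp
    rw [hrhs] at hmul
    have h11 : A * A.transpose + B * B.transpose = ((n+d:ℕ):ℝ) • 1 := by
      have := congrArg Matrix.toBlocks₁₁ hmul
      simpa [Matrix.toBlocks_fromBlocks₁₁] using this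
    have h21 : C * A.transpose + D * B.transpose = 0 := by
      have := congrArg Matrix.toBlocks₂₁ hmul
      simpa [Matrix.toBlocks_fromBlocks₂₁] using this
    -- key determinant identity
    have key : (Matrix.fromBlocks A B C D).det * A.det = ((n+d:ℕ):ℝ)^n * D.det := by
      have hK : Matrix.fromBlocks A B C D * Matrix.fromBlocks A.transpose 0 B.transpose 1
          = Matrix.fromBlocks (((n+d:ℕ):ℝ) • 1) B 0 D := by
        rw [Matrix.fromBlocks_multiply]
        congr 1 <;> simp [h11, h21]
      have := congrArg Matrix.det hK
      rw [Matrix.det_mul, Matrix.det_fromBlocks_zero₁₂, Matrix.det_fromBlocks_zero₂₁,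
        Matrix.det_transpose, Matrix.det_one, Matrix.det_smul, Matrix.det_one] at this
      simpa using this
    -- |det H| = h ^ (h/2)
    have hdet2 : (Matrix.fromBlocks A B C D).det ^ 2 = ((n+d:ℕ):ℝ) ^ (n+d) := by
      have := congrArg Matrix.det hH
      rw [Matrix.det_mul, Matrix.det_transpose, Matrix.det_smul, Matrix.det_one] at this
      simpa [sq, Fintype.card_sum] using this
    have habs : |(Matrix.fromBlocks A B C D).det| = ((n+d:ℕ):ℝ) ^ (((n+d:ℕ):ℝ)/2) := by
      rw [← Real.sqrt_sq_eq_abs, hdet2, ← Real.rpow_natCast ((n+d:ℕ):ℝ) (n+d),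
        Real.rpow_natCast, ← Real.rpow_natCast ((n+d:ℕ):ℝ) (n+d),
        Real.sqrt_eq_rpow, ← Real.rpow_mul hpos'.le]
      congr 1
      ring
    have hne : |(Matrix.fromBlocks A B C D).det| ≠ 0 := by
      rw [habs]; exact (Real.rpow_pos_of_pos hpos' _).ne'
    have keyabs : |(Matrix.fromBlocks A B C D).det| * |A.det| = ((n+d:ℕ):ℝ)^n * |D.det| := by
      rw [← abs_mul, key, abs_mul, abs_of_nonneg (pow_nonneg hpos'.le n)]
    have hcomb : ((n+d:ℕ):ℝ) ^ (((n+d:ℕ):ℝ)/2) * ((n+d:ℕ):ℝ) ^ (((n+d:ℕ):ℝ)/2 - (d:ℝ))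
        = ((n+d:ℕ):ℝ) ^ n := by
      rw [← Real.rpow_add hpos', ← Real.rpow_natCast ((n+d:ℕ):ℝ) n]
      congr 1
      push_cast
      ring
    apply mul_left_cancel₀ hne
    rw [keyabs, habs, ← mul_assoc, hcomb]
end

section
/- If H is an h×h Hadamard matrix (entries ±1, H·Hᵀ = h·I) and 0 < n < h, then there exists an n×n submatrix M of H (obtained by selecting n rows and n columns) with |det(M)| ≥ 2^(d-1)·h^(h/2 - d), where d = h - n. -/
/-!
If `M * N = 1` in block form, then `M * fromBlocks 1 N₁₂ 0 N₂₂` is block lower triangular, which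
gives Jacobi's complementary minor identity `det M₁₁ = det M * det N₂₂`. For a Hadamard matrix
`N = Hᵀ / h` and `|det H| = h ^ (h / 2)`, so every `n × n` minor of `H` has absolute value
`h ^ (h / 2 - d)` times that of the complementary `d × d` minor, `d = h - n`. Since `H` is
invertible, some `d × d` minor is nonsingular, and a nonsingular `±1` matrix of size `d` has
determinant at least `2 ^ (d - 1)` in absolute value: after subtracting one row from the others,
the remaining `d - 1` rows are even.
-/

open Function Matrix

theorem Function.Injective.exists_sumEquiv_inr {ι κ α : Type*} [Fintype ι] [Fintype κ]
    [Fintype α] {g : κ → α} (hg : Injective g)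
    (hcard : Fintype.card ι + Fintype.card κ = Fintype.card α) :
    ∃ e : ι ⊕ κ ≃ α, ∀ k, e (Sum.inr k) = g k := by
  classical
  have hcompl : Fintype.card ι = Fintype.card ↥(Set.range g)ᶜ := by
    rw [Fintype.card_compl_set, Set.card_range_of_injective hg]
    omega
  let φ : ι ≃ ↥(Set.range g)ᶜ := Fintype.equivOfCardEq hcompl
  refine ⟨(Equiv.sumComm ι κ).trans
    ((Equiv.sumCongr (Equiv.ofInjective g hg) φ).trans (Equiv.Set.sumCompl _)), fun k => ?_⟩
  simp

namespace Matrix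

variable {ι : Type*} [Fintype ι] [DecidableEq ι]

theorem pow_card_dvd_det_of_dvd_rows {R : Type*} [CommRing R] (M : Matrix ι ι R) (s : Finset ι)
    (k : R) (hk : ∀ i ∈ s, ∀ j, k ∣ M i j) : k ^ s.card ∣ M.det := by
  rw [← det_transpose, det_apply']
  refine Finset.dvd_sum fun σ _ => Dvd.dvd.mul_left ?_ _
  calc k ^ s.card = ∏ _i ∈ s, k := (Finset.prod_const k).symm
    _ ∣ ∏ i ∈ s, M i (σ i) := Finset.prod_dvd_prod_of_dvd _ _ fun i hi => hk i hi _
    _ ∣ ∏ i, M i (σ i) := Finset.prod_dvd_prod_of_subset _ _ _ (Finset.subset_univ s)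

theorem pow_dvd_det_of_dvd_sub_row {R : Type*} [CommRing R] (M : Matrix ι ι R) (z : ι) (k : R)
    (hk : ∀ i j, k ∣ M i j - M z j) : k ^ (Fintype.card ι - 1) ∣ M.det := by
  set W : Matrix ι ι R := fun i j => M i j - (if i = z then 0 else 1) * M z j
  have hMW : M.det = W.det :=
    det_eq_of_forall_row_eq_smul_add_const (fun i => if i = z then 0 else 1) z (by simp)
      fun i j => by simp [W]
  have hW : ∀ i ∈ Finset.univ.erase z, ∀ j, k ∣ W i j := fun i hi j => by
    simpa [W, Finset.ne_of_mem_erase hi] using hk i j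
  simpa [Finset.card_erase_of_mem, hMW] using W.pow_card_dvd_det_of_dvd_rows _ k hW

theorem two_pow_le_abs_det_of_eq_one_or_neg_one [Nonempty ι] (B : Matrix ι ι ℝ)
    (hB : ∀ i j, B i j = 1 ∨ B i j = -1) (hdet : B.det ≠ 0) :
    (2 : ℝ) ^ (Fintype.card ι - 1) ≤ |B.det| := by
  set Z : Matrix ι ι ℤ := fun i j => if B i j = 1 then 1 else -1
  have hZB : Z.map (Int.cast : ℤ → ℝ) = B := by
    ext i j
    show ((Z i j : ℤ) : ℝ) = B i j
    rcases hB i j with hij | hij <;> norm_num [Z, hij]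
  have hdetZ : (Z.det : ℝ) = B.det := by
    rw [← hZB]
    simpa using (Int.castRingHom ℝ).map_det Z
  have hdvd : (2 : ℤ) ^ (Fintype.card ι - 1) ∣ Z.det :=
    Z.pow_dvd_det_of_dvd_sub_row (Classical.arbitrary ι) 2 fun i j => by
      unfold Z; split_ifs <;> norm_num
  have hZ : Z.det ≠ 0 := by rintro h0; simp [← hdetZ, h0] at hdet
  have hle := Int.le_of_dvd (abs_pos.mpr hZ) ((dvd_abs _ _).mpr hdvd)
  rw [← hdetZ, ← Int.cast_abs]
  exact_mod_cast hle

theorem exists_isUnit_submatrix {K : Type*} [Field K] {A : Matrix ι ι K} (hA : IsUnit A) {d : ℕ}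
    (hd : d ≤ Fintype.card ι) :
    ∃ r c : Fin d → ι, Injective r ∧ Injective c ∧ IsUnit (A.submatrix r c) := by
  obtain ⟨r⟩ := Function.Embedding.nonempty_of_card_le (α := Fin d) (β := ι) (by simpa using hd)
  set T : Matrix (Fin d) ι K := A.submatrix r id
  have hrank : T.rank = d := by
    simpa using LinearIndependent.rank_matrix (M := T)
      ((linearIndependent_rows_iff_isUnit.mpr hA).comp r r.injective)
  obtain ⟨κ, a, ha, hspan, hli⟩ := exists_linearIndependent' K T.col
  have : Fintype κ := Fintype.ofInjective a ha
  have hκ : Fintype.card κ = d := by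
    rw [linearIndependent_iff_card_eq_finrank_span.mp hli, Set.finrank, hspan,
      ← rank_eq_finrank_span_cols, hrank]
  let e : Fin d ≃ κ := (Fintype.equivFinOfCardEq hκ).symm
  refine ⟨r, a ∘ e, r.injective, ha.comp e.injective, ?_⟩
  exact linearIndependent_cols_iff_isUnit.mp (hli.comp e e.injective)

theorem det_toBlocks₁₁_eq_det_mul_det_toBlocks₂₂ {m n R : Type*} [Fintype m] [Fintype n]
    [DecidableEq m] [DecidableEq n] [CommRing R] {M N : Matrix (m ⊕ n) (m ⊕ n) R}
    (hMN : M * N = 1) : M.toBlocks₁₁.det = M.det * N.toBlocks₂₂.det := by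
  have hblocks := hMN
  rw [← fromBlocks_toBlocks M, ← fromBlocks_toBlocks N, fromBlocks_multiply, ← fromBlocks_one,
    fromBlocks_inj] at hblocks
  obtain ⟨-, h12, -, h22⟩ := hblocks
  have hprod : M * fromBlocks 1 N.toBlocks₁₂ 0 N.toBlocks₂₂ =
      fromBlocks M.toBlocks₁₁ 0 M.toBlocks₂₁ 1 := by
    rw [← fromBlocks_toBlocks M, fromBlocks_multiply]
    simp [h12, h22]
  simpa [det_fromBlocks_zero₂₁, det_fromBlocks_zero₁₂] using (congrArg det hprod).symm

theorem abs_det_eq_rpow_of_mul_transpose_eq_smul_one {c : ℝ} (hc : 0 ≤ c) {M : Matrix ι ι ℝ}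
    (hM : M * Mᵀ = c • 1) : |M.det| = c ^ ((Fintype.card ι : ℝ) / 2) := by
  have hsq : M.det ^ 2 = c ^ Fintype.card ι := by
    simpa [det_smul, sq] using congrArg det hM
  rw [← Real.sqrt_sq_eq_abs, hsq, Real.sqrt_eq_rpow, ← Real.rpow_natCast, ← Real.rpow_mul hc]
  ring_nf

theorem abs_det_submatrix_inl_eq {m κ : Type*} [Fintype m] [Fintype κ] [DecidableEq m]
    [DecidableEq κ] {c : ℝ} (hc : 0 < c) {H : Matrix ι ι ℝ} (hH : H * Hᵀ = c • 1)
    (er ec : m ⊕ κ ≃ ι) :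
    |(H.submatrix (er ∘ Sum.inl) (ec ∘ Sum.inl)).det| =
      c ^ ((Fintype.card ι : ℝ) / 2) / c ^ Fintype.card κ *
        |(H.submatrix (er ∘ Sum.inr) (ec ∘ Sum.inr)).det| := by
  set H' := H.submatrix er ec
  have hH' : H' * H'ᵀ = c • 1 := by
    rw [transpose_submatrix, submatrix_mul_equiv, hH, ← submatrix_one_equiv er]
    rfl
  have hinv : H' * (c⁻¹ • H'ᵀ) = 1 := by
    rw [Matrix.mul_smul, hH', smul_smul, inv_mul_cancel₀ hc.ne', one_smul]
  have hblock : (c⁻¹ • H'ᵀ).toBlocks₂₂ = c⁻¹ • (H.submatrix (er ∘ Sum.inr) (ec ∘ Sum.inr))ᵀ :=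
    rfl
  have hcard : Fintype.card (m ⊕ κ) = Fintype.card ι := Fintype.card_congr er
  rw [show H.submatrix (er ∘ Sum.inl) (ec ∘ Sum.inl) = H'.toBlocks₁₁ from rfl,
    det_toBlocks₁₁_eq_det_mul_det_toBlocks₂₂ hinv, hblock, det_smul, det_transpose,
    abs_mul, abs_det_eq_rpow_of_mul_transpose_eq_smul_one hc.le hH', hcard, abs_mul,
    abs_pow, abs_inv, abs_of_pos hc, inv_pow]
  ring

end Matrix

theorem stmt_8_general (h n : ℕ) (hnh : n < h)
    (H : Matrix (Fin h) (Fin h) ℝ)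
    (hpm : ∀ i j, H i j = 1 ∨ H i j = -1)
    (hH : H * H.transpose = (h : ℝ) • 1) :
    ∃ (r : Fin n → Fin h) (c : Fin n → Fin h),
      Function.Injective r ∧ Function.Injective c ∧
      (2 : ℝ) ^ (h - n - 1) * (h : ℝ) ^ ((h : ℝ) / 2 - ((h - n : ℕ) : ℝ)) ≤
        |(H.submatrix r c).det| := by
  have hh : (0 : ℝ) < h := by exact_mod_cast (Nat.zero_le n).trans_lt hnh
  have hinv : H * ((h : ℝ)⁻¹ • Hᵀ) = 1 := by
    rw [Matrix.mul_smul, hH, smul_smul, inv_mul_cancel₀ hh.ne', one_smul]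
  have hunit : IsUnit H := (isUnit_iff_isUnit_det H).mpr (isUnit_det_of_right_inverse hinv)
  obtain ⟨r₀, c₀, hr₀, hc₀, hB⟩ := exists_isUnit_submatrix hunit (d := h - n) (by simp)
  have hcard : Fintype.card (Fin n) + Fintype.card (Fin (h - n)) = Fintype.card (Fin h) := by
    simp only [Fintype.card_fin]; omega
  obtain ⟨er, her⟩ := hr₀.exists_sumEquiv_inr hcard
  obtain ⟨ec, hec⟩ := hc₀.exists_sumEquiv_inr hcard
  have : Nonempty (Fin (h - n)) := ⟨⟨0, by omega⟩⟩
  have h2 := two_pow_le_abs_det_of_eq_one_or_neg_one (H.submatrix r₀ c₀) (fun i j => hpm _ _)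
    ((isUnit_iff_isUnit_det _).mp hB).ne_zero
  refine ⟨er ∘ Sum.inl, ec ∘ Sum.inl, er.injective.comp Sum.inl_injective,
    ec.injective.comp Sum.inl_injective, ?_⟩
  rw [abs_det_submatrix_inl_eq hh hH er ec, show er ∘ Sum.inr = r₀ from funext her,
    show ec ∘ Sum.inr = c₀ from funext hec, Real.rpow_sub hh, Real.rpow_natCast]
  simp only [Fintype.card_fin] at h2 ⊢
  rw [mul_comm]
  gcongr

theorem stmt_8 (h n : ℕ) (hn : 0 < n) (hnh : n < h)
    (H : Matrix (Fin h) (Fin h) ℝ)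
    (hpm : ∀ i j, H i j = 1 ∨ H i j = -1)
    (hH : H * H.transpose = (h : ℝ) • 1) :
    ∃ (r : Fin n → Fin h) (c : Fin n → Fin h),
      Function.Injective r ∧ Function.Injective c ∧
      (2 : ℝ) ^ (h - n - 1) * (h : ℝ) ^ ((h : ℝ) / 2 - ((h - n : ℕ) : ℝ)) ≤
        |(H.submatrix r c).det| :=
  stmt_8_general h n hnh H hpm hH
end

section
/- If there exists a Hadamard matrix of order h and n > h ≥ 1, then there exists an n×n matrix with entries in {+1,-1} whose determinant has absolute value at least 2^(n-h)·h^(h/2). -/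
open Matrix in
lemma step_pm (m : ℕ) (A : Matrix (Fin (m+1)) (Fin (m+1)) ℝ)
    (hA : ∀ i j, A i j = 1 ∨ A i j = -1) :
    ∃ B : Matrix (Fin (m+2)) (Fin (m+2)) ℝ,
      (∀ i j, B i j = 1 ∨ B i j = -1) ∧ B.det = 2 * A.det := by
  set B : Matrix (Fin (m+2)) (Fin (m+2)) ℝ :=
    (Fin.cons (Fin.cons 1 (A 0))
      (fun i => Fin.cons (if i = 0 then (-1:ℝ) else 1) (A i))) with hB
  have hB0 : B 0 = Fin.cons (1:ℝ) (A 0) := by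
    rw [hB]; exact Fin.cons_zero _ _
  have hBsucc : ∀ i : Fin (m+1),
      B i.succ = Fin.cons (if i = 0 then (-1:ℝ) else 1) (A i) := by
    intro i; rw [hB]; exact Fin.cons_succ _ _ _
  have hB1 : B 1 = Fin.cons (-1:ℝ) (A 0) := by
    rw [← Fin.succ_zero_eq_one, hBsucc 0]; simp
  refine ⟨B, ?_, ?_⟩
  · intro i j
    refine Fin.cases ?_ (fun i' => ?_) i
    · rw [hB0]
      refine Fin.cases ?_ (fun j' => ?_) j
      · simp
      · rw [Fin.cons_succ]; exact hA _ _
    · rw [hBsucc]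
      refine Fin.cases ?_ (fun j' => ?_) j
      · rcases eq_or_ne i' 0 with hi | hi <;> simp [hi]
      · rw [Fin.cons_succ]; exact hA _ _
  · have hdet : (B.updateRow 1 (B 1 + (-1 : ℝ) • B 0)).det = B.det :=
      Matrix.det_updateRow_add_smul_self B (by simp : (1 : Fin (m+2)) ≠ 0) (-1)
    set C := B.updateRow 1 (B 1 + (-1 : ℝ) • B 0) with hC
    have hrow : ∀ j : Fin (m+2), C 1 j = if j = 0 then (-2:ℝ) else 0 := by
      intro j
      rw [hC, Matrix.updateRow_self, Pi.add_apply, Pi.smul_apply, hB0, hB1, smul_eq_mul]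
      refine Fin.cases ?_ (fun j' => ?_) j
      · simp; norm_num
      · simp [Fin.cons_succ, Fin.succ_ne_zero]
    have hsub : C.submatrix (Fin.succAbove 1) (Fin.succAbove 0) = A := by
      ext k l
      have hne : (1 : Fin (m+2)).succAbove k ≠ 1 := Fin.succAbove_ne _ _
      rw [Matrix.submatrix_apply, hC, Matrix.updateRow_ne hne, Fin.zero_succAbove]
      refine Fin.cases ?_ (fun k' => ?_) k
      · rw [← Fin.succ_zero_eq_one, Fin.succ_succAbove_zero, hB0, Fin.cons_succ]
      · rw [← Fin.succ_zero_eq_one, Fin.succ_succAbove_succ, hBsucc, Fin.cons_succ]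
        simp
    have hd := Matrix.det_succ_row C 1
    rw [Fin.sum_univ_succ] at hd
    rw [← hdet, hd]
    have h0 : C 1 0 = -2 := by rw [hrow]; simp
    have hz : ∀ j' : Fin (m+1),
        (-1:ℝ) ^ (((1:Fin (m+2)) : ℕ) + ((j'.succ : Fin (m+2)) : ℕ)) * C 1 j'.succ *
          (C.submatrix (Fin.succAbove 1) (Fin.succAbove j'.succ)).det = 0 := by
      intro j'
      have : C 1 j'.succ = 0 := by rw [hrow]; simp [Fin.succ_ne_zero]
      rw [this]; ring
    rw [Finset.sum_congr rfl (fun j' _ => hz j'), Finset.sum_const, smul_zero, add_zero,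
      h0, hsub]
    norm_num

open Matrix in
lemma grow_pm (k m : ℕ) (A : Matrix (Fin (m+1)) (Fin (m+1)) ℝ)
    (hA : ∀ i j, A i j = 1 ∨ A i j = -1) :
    ∃ B : Matrix (Fin (m+1+k)) (Fin (m+1+k)) ℝ,
      (∀ i j, B i j = 1 ∨ B i j = -1) ∧ B.det = 2 ^ k * A.det := by
  induction k with
  | zero => exact ⟨A, hA, by simp⟩
  | succ k ih =>
    obtain ⟨B, hBpm, hBdet⟩ := ih
    have e : m + 1 + k = (m + k) + 1 := by omega
    set B' : Matrix (Fin (m+k+1)) (Fin (m+k+1)) ℝ :=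
      Matrix.reindex (finCongr e) (finCongr e) B with hB'
    have hB'pm : ∀ i j, B' i j = 1 ∨ B' i j = -1 := fun i j => hBpm _ _
    have hB'det : B'.det = B.det := Matrix.det_reindex_self _ _
    obtain ⟨D, hDpm, hDdet⟩ := step_pm (m + k) B' hB'pm
    have e2 : (m + k) + 2 = m + 1 + (k + 1) := by omega
    refine ⟨Matrix.reindex (finCongr e2) (finCongr e2) D, fun i j => hDpm _ _, ?_⟩
    rw [Matrix.det_reindex_self, hDdet, hB'det, hBdet]
    ring

theorem stmt_10 (h n : ℕ) (hh : 1 ≤ h) (hn : h < n)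
    (H : Matrix (Fin h) (Fin h) ℝ)
    (hpm : ∀ i j, H i j = 1 ∨ H i j = -1)
    (hH : H * H.transpose = (h : ℝ) • 1) :
    ∃ A : Matrix (Fin n) (Fin n) ℝ,
      (∀ i j, A i j = 1 ∨ A i j = -1) ∧
      (2 : ℝ) ^ (n - h) * (h : ℝ) ^ ((h : ℝ) / 2) ≤ |A.det| := by
  have hsq : H.det ^ 2 = (h : ℝ) ^ h := by
    have := congrArg Matrix.det hH
    rwa [Matrix.det_mul, Matrix.det_transpose, Matrix.det_smul, Matrix.det_one,
      Fintype.card_fin, mul_one, ← sq] at this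
  have h0 : (0:ℝ) ≤ (h:ℝ) := by positivity
  have habs : |H.det| = (h : ℝ) ^ ((h : ℝ) / 2) := by
    have h1 : |H.det| = Real.sqrt ((h:ℝ) ^ h) := by
      rw [← hsq, Real.sqrt_sq_eq_abs]
    rw [h1, Real.sqrt_eq_rpow, ← Real.rpow_natCast (h:ℝ) h, ← Real.rpow_mul h0,
      mul_one_div]
  obtain ⟨m, rfl⟩ : ∃ m, h = m + 1 := ⟨h - 1, by omega⟩
  obtain ⟨B, hBpm, hBdet⟩ := grow_pm (n - (m+1)) m H hpm
  have e : m + 1 + (n - (m+1)) = n := by omega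
  refine ⟨Matrix.reindex (finCongr e) (finCongr e) B, fun i j => hBpm _ _, ?_⟩
  rw [Matrix.det_reindex_self, hBdet, abs_mul, abs_pow, habs]
  simp
end

section
/- If p is an odd prime then there exists a Hadamard matrix of order 2(p+1). -/
/-
For a finite field `F` of odd characteristic with quadratic character `χ`, the Paley matrix,
indexed by `Option F`, with entries `χ (x - y)` bordered by a row of `1`s and a column of
`χ (-1)`s, is a conference matrix: zero diagonal, `±1` off it, and `C * Cᵀ = q • 1` for `q = #F`.
Orthogonality of its rows is the autocorrelation `∑ x, χ x * χ (x + b) = -1` for `b ≠ 0`, which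
is `χ (-1)` times the Jacobi sum `J(χ, χ) = -χ (-1)`. A conference matrix `C` of order `n` is
normal, so `C + 1` and `C - 1` and their transposes commute, and then
`[[C + 1, C - 1], [(C - 1)ᵀ, -(C + 1)ᵀ]]` is a Hadamard matrix of order `2 n`. With `F = ZMod p`
this works for every odd prime `p`, whatever `p` is modulo `4`.
-/

namespace Matrix

variable {n R : Type*} [Fintype n] [CommRing R]

theorem fromBlocks_mul_transpose_self (X Y : Matrix n n R) :
    fromBlocks X Y Yᵀ (-Xᵀ) * (fromBlocks X Y Yᵀ (-Xᵀ))ᵀ =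
      fromBlocks (X * Xᵀ + Y * Yᵀ) (X * Y - Y * X) (Yᵀ * Xᵀ - Xᵀ * Yᵀ) (Yᵀ * Y + Xᵀ * X) := by
  rw [fromBlocks_transpose, fromBlocks_multiply]
  simp only [transpose_transpose, transpose_neg, Matrix.mul_neg, Matrix.neg_mul]
  congr 1 <;> abel

theorem fromBlocks_transpose_mul_self (X Y : Matrix n n R) :
    (fromBlocks X Y Yᵀ (-Xᵀ))ᵀ * fromBlocks X Y Yᵀ (-Xᵀ) =
      fromBlocks (Xᵀ * X + Y * Yᵀ) (Xᵀ * Y - Y * Xᵀ) (Yᵀ * X - X * Yᵀ) (Yᵀ * Y + X * Xᵀ) := by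
  rw [fromBlocks_transpose, fromBlocks_multiply]
  simp only [transpose_transpose, transpose_neg, Matrix.mul_neg, Matrix.neg_mul]
  congr 1 <;> abel

variable [DecidableEq n]

theorem transpose_mul_eq_smul_one_of_mul_transpose {A : Matrix n n R} {k : R} (hk : IsRegular k)
    (h : A * Aᵀ = k • 1) : Aᵀ * A = k • 1 := by
  have hdet : A.det * A.det = k ^ Fintype.card n := by
    simpa [det_mul, det_transpose, det_smul] using congr_arg det h
  have hA : IsLeftRegular A :=
    (isRegular_of_isLeftRegular_det (hdet ▸ hk.pow _).of_mul_left.left).left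
  exact hA <| show A * (Aᵀ * A) = A * (k • 1) by
    rw [← Matrix.mul_assoc, h, smul_mul_assoc, Matrix.one_mul, mul_smul_comm, Matrix.mul_one]

structure IsConference (C : Matrix n n R) : Prop where
  apply_self (i : n) : C i i = 0
  apply_of_ne {i j : n} : i ≠ j → C i j = 1 ∨ C i j = -1
  mul_transpose : C * Cᵀ = ((Fintype.card n : R) - 1) • 1
  transpose_mul : Cᵀ * C = ((Fintype.card n : R) - 1) • 1

namespace IsConference

variable {C : Matrix n n R}

theorem of_mul_transpose (h₀ : ∀ i, C i i = 0) (h₁ : ∀ i j, i ≠ j → C i j = 1 ∨ C i j = -1)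
    (hmul : C * Cᵀ = ((Fintype.card n : R) - 1) • 1)
    (hreg : IsRegular ((Fintype.card n : R) - 1)) : C.IsConference :=
  ⟨h₀, h₁ _ _, hmul, transpose_mul_eq_smul_one_of_mul_transpose hreg hmul⟩

theorem map {S : Type*} [CommRing S] (hC : C.IsConference) (f : R →+* S) :
    (C.map f).IsConference where
  apply_self i := by simp [hC.apply_self]
  apply_of_ne hij := by rcases hC.apply_of_ne hij with h | h <;> simp [h]
  mul_transpose := by
    rw [← transpose_map, ← Matrix.map_mul, hC.mul_transpose]
    ext i j; simp [one_apply, apply_ite f]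
  transpose_mul := by
    rw [← transpose_map, ← Matrix.map_mul, hC.transpose_mul]
    ext i j; simp [one_apply, apply_ite f]

theorem add_one_apply (hC : C.IsConference) (i j : n) :
    (C + 1) i j = 1 ∨ (C + 1) i j = -1 := by
  by_cases h : i = j
  · subst h; simp [hC.apply_self]
  · rcases hC.apply_of_ne h with h' | h' <;> simp [h, h']

theorem sub_one_apply (hC : C.IsConference) (i j : n) :
    (C - 1) i j = 1 ∨ (C - 1) i j = -1 := by
  by_cases h : i = j
  · subst h; simp [hC.apply_self]
  · rcases hC.apply_of_ne h with h' | h' <;> simp [h, h']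

end IsConference

end Matrix

theorem mem_unitary_of_eq_one_or_eq_neg_one {R : Type*} [Ring R] [StarRing R] {a : R}
    (h : a = 1 ∨ a = -1) : a ∈ unitary R := by
  rcases h with rfl | rfl <;> simp [Unitary.mem_iff]

namespace Matrix.IsConference

variable {n R : Type*} [Fintype n] [DecidableEq n] [CommRing R] [StarRing R] [TrivialStar R]

theorem isHadamard_fromBlocks {C : Matrix n n R} (hC : C.IsConference) :
    (fromBlocks (C + 1) (C - 1) (C - 1)ᵀ (-(C + 1)ᵀ)).IsHadamard := by
  refine ⟨?_, ?_, ?_⟩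
  · rintro (i | i) (j | j) <;> apply mem_unitary_of_eq_one_or_eq_neg_one
    · exact hC.add_one_apply i j
    · exact hC.sub_one_apply i j
    · exact hC.sub_one_apply j i
    · show -(C + 1) j i = 1 ∨ -(C + 1) j i = -1
      rcases hC.add_one_apply j i with h | h <;> simp [h]
  · rw [conjTranspose_eq_transpose_of_trivial, fromBlocks_mul_transpose_self, Fintype.card_sum,
      ← fromBlocks_one, fromBlocks_smul]
    simp only [transpose_add, transpose_sub, transpose_one, add_mul, mul_add, sub_mul, mul_sub,
      one_mul, mul_one, hC.mul_transpose, hC.transpose_mul]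
    congr 1 <;> module
  · rw [conjTranspose_eq_transpose_of_trivial, fromBlocks_transpose_mul_self, Fintype.card_sum,
      ← fromBlocks_one, fromBlocks_smul]
    simp only [transpose_add, transpose_sub, transpose_one, add_mul, mul_add, sub_mul, mul_sub,
      one_mul, mul_one, hC.mul_transpose, hC.transpose_mul]
    congr 1 <;> module

end Matrix.IsConference

section QuadraticChar

variable {F : Type*} [Field F] [Fintype F] [DecidableEq F]

theorem quadraticChar_sum_sub (hF : ringChar F ≠ 2) (x : F) :
    ∑ y, quadraticChar F (x - y) = 0 :=
  ((Equiv.subLeft x).sum_comp (quadraticChar F)).trans (quadraticChar_sum_zero hF)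

theorem quadraticChar_sum_mul_add (hF : ringChar F ≠ 2) (b : F) :
    ∑ x, quadraticChar F x * quadraticChar F (x + b) =
      if b = 0 then (Fintype.card F : ℤ) - 1 else -1 := by
  set χ := quadraticChar F
  have hsq : ∀ {a : F}, a ≠ 0 → χ a * χ a = 1 := fun ha => by
    rw [← sq]; exact quadraticChar_sq_one ha
  split_ifs with hb
  · simp_rw [hb, add_zero, ← MulChar.mul_apply, ← sq]
    rw [(quadraticChar_isQuadratic F).sq_eq_one, MulChar.sum_one_eq_card_units,
      Fintype.card_units, Nat.cast_sub Fintype.card_pos, Nat.cast_one]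
  · have hnb : -b ≠ 0 := neg_ne_zero.2 hb
    calc ∑ x, χ x * χ (x + b)
        = ∑ t, χ (-b * t) * χ (-b * t + b) :=
          (Equiv.sum_comp (Equiv.mulLeft₀ (-b) hnb) fun x => χ x * χ (x + b)).symm
      _ = ∑ t, χ (-1) * (χ t * χ (1 - t)) := by
          refine Fintype.sum_congr _ _ fun t => ?_
          rw [show -b * t + b = b * (1 - t) by ring, show -b * t = -1 * b * t by ring]
          simp only [map_mul]
          linear_combination χ (-1) * χ t * χ (1 - t) * hsq hb
      _ = χ (-1) * jacobiSum χ χ⁻¹ := by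
          rw [(quadraticChar_isQuadratic F).inv, jacobiSum, Finset.mul_sum]
      _ = -1 := by
          rw [jacobiSum_nontrivial_inv (quadraticChar_ne_one hF), mul_neg,
            hsq (neg_ne_zero.2 one_ne_zero)]

theorem quadraticChar_sum_sub_mul_sub (hF : ringChar F ≠ 2) (x y : F) :
    ∑ z, quadraticChar F (x - z) * quadraticChar F (y - z) =
      if x = y then (Fintype.card F : ℤ) - 1 else -1 := by
  calc ∑ z, quadraticChar F (x - z) * quadraticChar F (y - z)
      = ∑ u, quadraticChar F u * quadraticChar F (u + (y - x)) := by
        rw [← Equiv.sum_comp (Equiv.subLeft x)]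
        refine Fintype.sum_congr _ _ fun u => ?_
        rw [Equiv.subLeft_apply, sub_sub_cancel, show y - (x - u) = u + (y - x) by ring]
    _ = _ := by simp_rw [quadraticChar_sum_mul_add hF, sub_eq_zero, @eq_comm _ y]

end QuadraticChar

section Paley

open Matrix

variable (F : Type*) [Field F] [Fintype F] [DecidableEq F]

def paley : Matrix (Option F) (Option F) ℤ :=
  of fun i j =>
    match i, j with
    | none, none => 0
    | none, some _ => 1
    | some _, none => quadraticChar F (-1)
    | some x, some y => quadraticChar F (x - y)

variable {F}

@[simp] theorem paley_none_none : paley F none none = 0 := rfl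
@[simp] theorem paley_none_some (y : F) : paley F none (some y) = 1 := rfl
@[simp] theorem paley_some_none (x : F) : paley F (some x) none = quadraticChar F (-1) := rfl
@[simp] theorem paley_some_some (x y : F) : paley F (some x) (some y) = quadraticChar F (x - y) :=
  rfl

theorem paley_mul_transpose (hF : ringChar F ≠ 2) :
    paley F * (paley F)ᵀ = ((Fintype.card (Option F) : ℤ) - 1) • 1 := by
  ext (_ | x) (_ | y) <;>
    simp [-quadraticChar_apply, mul_apply, Fintype.sum_option, one_apply, quadraticChar_sum_sub hF,
      quadraticChar_sum_sub_mul_sub hF]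
  rw [← sq, quadraticChar_sq_one (neg_ne_zero.2 one_ne_zero)]
  split_ifs <;> ring

theorem isConference_paley (hF : ringChar F ≠ 2) : (paley F).IsConference := by
  refine .of_mul_transpose ?_ ?_ (paley_mul_transpose hF) ?_
  · rintro (_ | x) <;> simp
  · rintro (_ | x) (_ | y) hxy
    · exact absurd rfl hxy
    · simp
    · exact quadraticChar_dichotomy (neg_ne_zero.2 one_ne_zero)
    · exact quadraticChar_dichotomy (sub_ne_zero.2 fun h => hxy (h ▸ rfl))
  · simp [isRegular_iff_ne_zero, Fintype.card_ne_zero]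

end Paley

open Matrix in
theorem stmt_15 (p : ℕ) (hp : p.Prime) (hodd : Odd p) :
    ∃ H : Matrix (Fin (2 * (p + 1))) (Fin (2 * (p + 1))) ℝ,
      (∀ i j, H i j = 1 ∨ H i j = -1) ∧
      H * H.transpose = ((2 * (p + 1) : ℕ) : ℝ) • 1 := by
  have := Fact.mk hp
  have hF : ringChar (ZMod p) ≠ 2 := by
    rw [ZMod.ringChar_zmod_n]; rintro rfl; exact Nat.not_odd_iff_even.2 even_two hodd
  have hH := ((isConference_paley hF).map (Int.castRingHom ℝ)).isHadamard_fromBlocks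
  have hcard : Fintype.card (Option (ZMod p) ⊕ Option (ZMod p)) = 2 * (p + 1) := by
    simp [ZMod.card]; ring
  obtain ⟨hentry, hmul, -⟩ :=
    hH.reindex (Fintype.equivFinOfCardEq hcard) (Fintype.equivFinOfCardEq hcard)
  refine ⟨_, fun i j => Unitary.mem_iff_eq_one_or_eq_neg_one.1 (hentry i j), ?_⟩
  simpa [conjTranspose_eq_transpose_of_trivial] using hmul
end

section
/- Assume that for every h ≡ 0 (mod 4), h ≥ 4, there exists a Hadamard matrix H of order h with excess σ(H) ≥ (2/π)^(1/2)·h^(3/2), and that D(h+1) ≥ h^(h/2)·(1 + σ(h)/h) where σ(h) is the maximal excess. Then for n ≡ 1 (mod 4), n ≥ 5, R(n) := D(n)/n^(n/2) satisfies R(n) ≥ (2/(πe))^(1/2). -/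
/-!
Write `n = h + 1`. Bordering a Hadamard matrix of maximal excess gives
`D(n) ≥ h^(h/2) (1 + √(2/π) √h)`, and `(1 + 1/h)^(h/2) ≤ √e` gives `h^(h/2) ≥ n^(n/2) / √(e n)`.
It remains to see `1 + c √h ≥ c √(h + 1)` for `c = √(2/π) ≤ 1`, which holds as `√(h + 1) ≤ √h + 1`.
-/

open Real

lemma add_one_rpow_half_le {x : ℝ} (hx : 0 < x) :
    (x + 1) ^ (x / 2) ≤ x ^ (x / 2) * exp (1 / 2) := by
  have hbase : x + 1 ≤ x * exp (1 / x) := by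
    calc x + 1 = x * (1 / x + 1) := by field_simp; ring
      _ ≤ x * exp (1 / x) := by gcongr; exact add_one_le_exp _
  calc (x + 1) ^ (x / 2) ≤ (x * exp (1 / x)) ^ (x / 2) := by gcongr
    _ = x ^ (x / 2) * exp (1 / 2) := by
      rw [mul_rpow hx.le (exp_pos _).le, ← exp_mul]
      field_simp

lemma add_one_rpow_half_self_le {x : ℝ} (hx : 0 < x) :
    (x + 1) ^ ((x + 1) / 2) ≤ √(exp 1) * √(x + 1) * x ^ (x / 2) := by
  rw [add_div, rpow_add (by positivity), ← sqrt_eq_rpow]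
  calc (x + 1) ^ (x / 2) * √(x + 1) ≤ x ^ (x / 2) * exp (1 / 2) * √(x + 1) := by
        gcongr; exact add_one_rpow_half_le hx
    _ = √(exp 1) * √(x + 1) * x ^ (x / 2) := by rw [sqrt_eq_rpow (exp 1), exp_one_rpow]; ring

lemma mul_sqrt_add_one_le {c x : ℝ} (hc₀ : 0 ≤ c) (hc₁ : c ≤ 1) (hx : 0 ≤ x) :
    c * √(x + 1) ≤ 1 + c * √x := by
  have : √(x + 1) ≤ √x + 1 := by
    rw [sqrt_le_left (by positivity)]
    nlinarith [sq_sqrt hx, sqrt_nonneg x]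
  nlinarith [sqrt_nonneg x]

theorem stmt_16_general (D σ : ℕ → ℝ)
    (hexcess : ∀ h : ℕ, 4 ≤ h → h % 4 = 0 →
      ((2 / Real.pi) ^ ((1 : ℝ) / 2)) * (h : ℝ) ^ ((3 : ℝ) / 2) ≤ σ h)
    (hborder : ∀ h : ℕ, 4 ≤ h → h % 4 = 0 →
      (h : ℝ) ^ ((h : ℝ) / 2) * (1 + σ h / h) ≤ D (h + 1))
    (n : ℕ) (hn : 5 ≤ n) (hmod : n % 4 = 1) :
    (2 / (Real.pi * Real.exp 1)) ^ ((1 : ℝ) / 2) ≤ D n / (n : ℝ) ^ ((n : ℝ) / 2) := by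
  obtain ⟨h, rfl⟩ : ∃ h, n = h + 1 := ⟨n - 1, by omega⟩
  have h4 : 4 ≤ h := by omega
  have hmod4 : h % 4 = 0 := by omega
  have hpos : (0 : ℝ) < h := by positivity
  have hc : √(2 / π) ≤ 1 := sqrt_le_one.mpr ((div_le_one pi_pos).mpr (by linarith [pi_gt_three]))
  have hexc : √(2 / π) * √h ≤ σ h / h := by
    rw [le_div_iff₀ hpos]
    have := hexcess h h4 hmod4
    rwa [← sqrt_eq_rpow, show (3 : ℝ) / 2 = 1 / 2 + 1 by norm_num, rpow_add hpos, rpow_one,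
      ← sqrt_eq_rpow, ← mul_assoc] at this
  rw [le_div_iff₀ (by positivity), ← sqrt_eq_rpow, sqrt_div' _ (by positivity),
    sqrt_mul pi_pos.le, ← div_div, ← sqrt_div' _ pi_pos.le]
  push_cast
  calc √(2 / π) / √(exp 1) * (h + 1 : ℝ) ^ (((h : ℝ) + 1) / 2)
      ≤ √(2 / π) / √(exp 1) * (√(exp 1) * √(h + 1) * (h : ℝ) ^ ((h : ℝ) / 2)) := by
        gcongr; exact add_one_rpow_half_self_le hpos
    _ = (h : ℝ) ^ ((h : ℝ) / 2) * (√(2 / π) * √(h + 1)) := by field_simp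
    _ ≤ (h : ℝ) ^ ((h : ℝ) / 2) * (1 + σ h / h) := by
        gcongr
        linarith [mul_sqrt_add_one_le (sqrt_nonneg _) hc hpos.le]
    _ ≤ D (h + 1) := by exact_mod_cast hborder h h4 hmod4

theorem stmt_16 (D σ : ℕ → ℝ)
    (hD : ∀ m : ℕ, 0 < m → IsGreatest
      {x : ℝ | ∃ A : Matrix (Fin m) (Fin m) ℝ,
        (∀ i j, A i j = 1 ∨ A i j = -1) ∧ x = |A.det|} (D m))
    (hσ : ∀ h : ℕ, 4 ≤ h → h % 4 = 0 → IsGreatest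
      {x : ℝ | ∃ H : Matrix (Fin h) (Fin h) ℝ,
        (∀ i j, H i j = 1 ∨ H i j = -1) ∧ H * H.transpose = (h : ℝ) • 1 ∧
        x = ∑ i, ∑ j, H i j} (σ h))
    (hexcess : ∀ h : ℕ, 4 ≤ h → h % 4 = 0 →
      ((2 / Real.pi) ^ ((1 : ℝ) / 2)) * (h : ℝ) ^ ((3 : ℝ) / 2) ≤ σ h)
    (hborder : ∀ h : ℕ, 4 ≤ h → h % 4 = 0 →
      (h : ℝ) ^ ((h : ℝ) / 2) * (1 + σ h / h) ≤ D (h + 1))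
    (n : ℕ) (hn : 5 ≤ n) (hmod : n % 4 = 1) :
    (2 / (Real.pi * Real.exp 1)) ^ ((1 : ℝ) / 2) ≤ D n / (n : ℝ) ^ ((n : ℝ) / 2) :=
  stmt_16_general D σ hexcess hborder n hn hmod
end

section
/- Let h ∈ ℕ admit a Hadamard matrix H of order h with excess σ(H) = σ. Then there exists a ±1-matrix of order h+1 with determinant of absolute value at least h^(h/2)·(1 + σ/h). -/
/-!
Border `H` by a row of `1`s and a column of `-1`s. By the Schur complement the bordered matrix
has determinant `det (H + J)`, `J` the all-ones matrix. Since `H Hᵀ = h I`, the vector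
`c = Hᵀ 𝟙 / h` solves `H c = 𝟙`, so `H + J = H (I + c 𝟙ᵀ)` and the matrix determinant lemma gives
`det (H + J) = det H * (1 + 𝟙ᵀ c) = det H * (1 + σ / h)`, while `|det H| = h ^ (h / 2)`.
-/

open Matrix

namespace Matrix

variable {n R : Type*}

def border [CommRing R] [DecidableEq n] (H : Matrix n n R) : Matrix (n ⊕ Fin 1) (n ⊕ Fin 1) R :=
  fromBlocks H (of fun _ _ => -1) (of fun _ _ => 1) 1

theorem border_eq_one_or_eq_neg_one [CommRing R] [DecidableEq n] {H : Matrix n n R}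
    (hpm : ∀ i j, H i j = 1 ∨ H i j = -1) (i j : n ⊕ Fin 1) :
    border H i j = 1 ∨ border H i j = -1 := by
  rcases i with i | i <;> rcases j with j | j
  · exact hpm i j
  · exact Or.inr rfl
  · exact Or.inl rfl
  · exact Or.inl (by simp [border, Subsingleton.elim i j])

variable [Fintype n] [DecidableEq n]

theorem det_border [CommRing R] (H : Matrix n n R) :
    (border H).det = (H + vecMulVec 1 1).det := by
  rw [border, det_fromBlocks_one₂₂, sub_eq_add_neg]
  congr
  ext
  simp [mul_apply, vecMulVec_apply]

theorem det_add_vecMulVec_of_mulVec_eq [CommRing R] {H : Matrix n n R} {c u : n → R}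
    (hc : H *ᵥ c = u) (v : n → R) :
    (H + vecMulVec u v).det = H.det * (1 + v ⬝ᵥ c) := by
  have hfactor : H + vecMulVec u v = H * (1 + vecMulVec c v) := by
    rw [Matrix.mul_add, Matrix.mul_one, mul_vecMulVec, hc]
  rw [hfactor, det_mul, vecMulVec_eq Unit, det_one_add_replicateCol_mul_replicateRow]

theorem mulVec_inv_smul_transpose_mulVec {K : Type*} [Field K] [CharZero K] {H : Matrix n n K}
    (hH : H * Hᵀ = (Fintype.card n : K) • 1) (u : n → K) :
    H *ᵥ ((Fintype.card n : K)⁻¹ • (Hᵀ *ᵥ u)) = u := by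
  cases isEmpty_or_nonempty n
  · exact Subsingleton.elim _ _
  · rw [mulVec_smul, mulVec_mulVec, hH, smul_mulVec, one_mulVec, smul_smul,
      inv_mul_cancel₀ (by simp), one_smul]

theorem det_add_vecMulVec_one_one_of_mul_transpose_eq {K : Type*} [Field K] [CharZero K]
    {H : Matrix n n K} (hH : H * Hᵀ = (Fintype.card n : K) • 1) :
    (H + vecMulVec 1 1).det = H.det * (1 + (∑ i, ∑ j, H i j) / Fintype.card n) := by
  rw [det_add_vecMulVec_of_mulVec_eq (mulVec_inv_smul_transpose_mulVec hH 1)]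
  simp only [dotProduct_smul, one_dotProduct, mulVec, dotProduct_one, transpose_apply,
    smul_eq_mul]
  rw [Finset.sum_comm, div_eq_inv_mul]

theorem abs_det_of_mul_transpose_eq_smul_one {H : Matrix n n ℝ} {c : ℝ} (hc : 0 ≤ c)
    (hH : H * Hᵀ = c • 1) : |H.det| = c ^ ((Fintype.card n : ℝ) / 2) := by
  have hsq : H.det ^ 2 = c ^ Fintype.card n := by
    simpa [det_mul, det_transpose, ← sq, det_smul] using congrArg det hH
  rw [← Real.sqrt_sq_eq_abs, hsq, Real.sqrt_eq_rpow, ← Real.rpow_natCast, ← Real.rpow_mul hc]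
  ring_nf

end Matrix

theorem stmt_17 (h : ℕ) (H : Matrix (Fin h) (Fin h) ℝ)
    (hpm : ∀ i j, H i j = 1 ∨ H i j = -1)
    (hH : H * H.transpose = (h : ℝ) • 1) :
    ∃ A : Matrix (Fin (h + 1)) (Fin (h + 1)) ℝ,
      (∀ i j, A i j = 1 ∨ A i j = -1) ∧
      (h : ℝ) ^ ((h : ℝ) / 2) * (1 + (∑ i, ∑ j, H i j) / h) ≤ |A.det| := by
  let e : Fin h ⊕ Fin 1 ≃ Fin (h + 1) := finSumFinEquiv
  refine ⟨reindex e e (border H), fun i j => border_eq_one_or_eq_neg_one hpm _ _, ?_⟩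
  have hH' : H * Hᵀ = (Fintype.card (Fin h) : ℝ) • 1 := by rwa [Fintype.card_fin]
  rw [det_reindex_self, det_border, det_add_vecMulVec_one_one_of_mul_transpose_eq hH', abs_mul,
    abs_det_of_mul_transpose_eq_smul_one h.cast_nonneg hH, Fintype.card_fin]
  exact mul_le_mul_of_nonneg_left (le_abs_self _) (by positivity)
end
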